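/- Let Γ be a countable amenable group and α an action of Γ by homeomorphisms on a nonempty compact Hausdorff 0-dimensional space X. Then b ∈ T(α) is an order unit if and only if μ(b) > 0 for every μ ∈ M(α). -/

import Mathlib

open MeasureTheory Set
open scoped ENNReal

/-! Preliminary definitions: the clopen type semigroup of an action of a group `Γ`
by homeomorphisms on a topological space `X`, invariant measures, dynamical comparison,
topological full groups, and the topology on spaces of actions. -/

/-- The group of self-homeomorphisms of `X`, with `(g * h) x = g (h x)`. -/
instance homeoGroup (X : Type*) [TopologicalSpace X] : Group (X ≃ₜ X) where
  mul g h := h.trans g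
  one := Homeomorph.refl X
  inv := Homeomorph.symm
  mul_assoc a b c := Homeomorph.ext fun _ => rfl
  one_mul a := Homeomorph.ext fun _ => rfl
  mul_one a := Homeomorph.ext fun _ => rfl
  inv_mul_cancel a := Homeomorph.ext fun x => a.symm_apply_apply x

/-- The Cantor space `{0,1}^ℕ`. -/
abbrev Cantor : Type := ℕ → Bool

section Defs

variable {Γ : Type*} [Group Γ] {X : Type*} [TopologicalSpace X]

/-- A left-invariant finitely additive probability measure on (the power set of) `Γ`,
with values in `[0,1]`. `Γ` is amenable iff such a measure exists. -/
def IsInvFapm {Γ : Type*} [Group Γ] (m : Set Γ → ℝ) : Prop :=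
  (∀ E : Set Γ, 0 ≤ m E) ∧ (∀ E : Set Γ, m E ≤ 1) ∧ m Set.univ = 1 ∧
  (∀ E F : Set Γ, Disjoint E F → m (E ∪ F) = m E + m F) ∧
  (∀ (γ : Γ) (E : Set Γ), m ((γ * ·) '' E) = m E)

/-- The action of `γ ∈ Γ` on continuous `ℕ`-valued functions: `(γ · f)(x) = f(γ⁻¹ · x)`. -/
def actC (α : Γ →* X ≃ₜ X) (γ : Γ) (f : C(X, ℕ)) : C(X, ℕ) :=
  f.comp (α γ⁻¹)

/-- The equidecomposability relation `∼` on `C(X, ℕ)`: `f ∼ g` iff `f = h₁ + ⋯ + hₙ`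
and `g = γ₁·h₁ + ⋯ + γₙ·hₙ` for some `hᵢ ∈ C(X,ℕ)`, `γᵢ ∈ Γ`. -/
def TypeRel (α : Γ →* X ≃ₜ X) (f g : C(X, ℕ)) : Prop :=
  ∃ (n : ℕ) (h : Fin n → C(X, ℕ)) (γ : Fin n → Γ),
    f = ∑ i, h i ∧ g = ∑ i, actC α (γ i) (h i)

/-- The additive congruence on `C(X, ℕ)` generated by `∼` (since `∼` is itself an
additive congruence, this is just `∼`). -/
def typeCon (α : Γ →* X ≃ₜ X) : AddCon C(X, ℕ) := addConGen (TypeRel α)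

/-- The clopen type semigroup `T(α) = C(X,ℕ)/∼`. -/
abbrev TypeSemigroup (α : Γ →* X ≃ₜ X) := (typeCon α).Quotient

/-- The class `[f] ∈ T(α)` of `f ∈ C(X, ℕ)`. -/
def cls (α : Γ →* X ≃ₜ X) (f : C(X, ℕ)) : TypeSemigroup α := (typeCon α).toQuotient f

/-- The algebraic preorder on `T(α)`: `a ≤ b` iff `a + c = b` for some `c`. -/
def tle (α : Γ →* X ≃ₜ X) (a b : TypeSemigroup α) : Prop := ∃ c, a + c = b

/-- `T(α)` is unperforated: `n • a ≤ n • b` implies `a ≤ b` for all `n ≥ 1`. -/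
def IsUnperforated (α : Γ →* X ≃ₜ X) : Prop :=
  ∀ (a b : TypeSemigroup α) (n : ℕ), 1 ≤ n → tle α (n • a) (n • b) → tle α a b

/-- `T(α)` is almost unperforated: `(n+1) • a ≤ n • b` implies `a ≤ b`. -/
def IsAlmostUnperforated (α : Γ →* X ≃ₜ X) : Prop :=
  ∀ (a b : TypeSemigroup α) (n : ℕ), tle α ((n + 1) • a) (n • b) → tle α a b

/-- `T(α)` is cancellative: `a + b = a + c` implies `b = c`. -/
def IsCancellative (α : Γ →* X ≃ₜ X) : Prop :=
  ∀ a b c : TypeSemigroup α, a + b = a + c → b = c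

/-- The algebraic preorder on `T(α)` is a partial order, i.e. it is antisymmetric. -/
def TleAntisymm (α : Γ →* X ≃ₜ X) : Prop :=
  ∀ a b : TypeSemigroup α, tle α a b → tle α b a → a = b

/-- `b` is an order unit of `T(α)`: every `a` satisfies `a ≤ k • b` for some `k ∈ ℕ`. -/
def IsOrderUnit (α : Γ →* X ≃ₜ X) (b : TypeSemigroup α) : Prop :=
  ∀ a : TypeSemigroup α, ∃ k : ℕ, tle α a (k • b)

/-- A state on `T(α)`: an additive map to `[0,∞]` sending `0` to `0`. -/
def IsState (α : Γ →* X ≃ₜ X) (ν : TypeSemigroup α → ℝ≥0∞) : Prop :=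
  ν 0 = 0 ∧ ∀ a b : TypeSemigroup α, ν (a + b) = ν a + ν b

/-- `M(α)`: the set of `Γ`-invariant Radon (regular Borel) probability measures on `X`. -/
def invRadon (α : Γ →* X ≃ₜ X) : Set (@Measure X (borel X)) :=
  letI : MeasurableSpace X := borel X
  {μ : Measure X | IsProbabilityMeasure μ ∧ μ.Regular ∧ ∀ γ : Γ, Measure.map ⇑(α γ) μ = μ}

/-- The set of `Γ`-invariant Borel probability measures on `X`. -/
def invBorel (α : Γ →* X ≃ₜ X) : Set (@Measure X (borel X)) :=
  letI : MeasurableSpace X := borel X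
  {μ : Measure X | IsProbabilityMeasure μ ∧ ∀ γ : Γ, Measure.map ⇑(α γ) μ = μ}

/-- `μ([f]) = ∫ f dμ`, the value of (the state associated with) a measure on the class of
`f ∈ C(X, ℕ)`. -/
noncomputable def intOf {X : Type*} [TopologicalSpace X] (μ : @Measure X (borel X))
    (f : C(X, ℕ)) : ℝ :=
  letI : MeasurableSpace X := borel X
  ∫ x, (f x : ℝ) ∂μ

/-- `A` is subequidecomposable to `B`: there are a partition `A = A₁ ⊔ ⋯ ⊔ Aₙ` into clopen
sets and `γ₁, …, γₙ ∈ Γ` with `γ₁A₁, …, γₙAₙ` pairwise disjoint and contained in `B`. -/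
def Subequidecomposable (α : Γ →* X ≃ₜ X) (A B : Set X) : Prop :=
  ∃ (n : ℕ) (P : Fin n → Set X) (γ : Fin n → Γ),
    (∀ i, IsClopen (P i)) ∧ (Pairwise fun i j => Disjoint (P i) (P j)) ∧
    (⋃ i, P i) = A ∧
    (Pairwise fun i j => Disjoint (⇑(α (γ i)) '' P i) (⇑(α (γ j)) '' P j)) ∧
    ∀ i, ⇑(α (γ i)) '' P i ⊆ B

/-- Dynamical comparison (with respect to invariant Radon probability measures): for all
clopen `A`, `B` with `B` nonempty and `μ(A) < μ(B)` for every `μ ∈ M(α)`, `A` is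
subequidecomposable to `B`. -/
def DynComparison (α : Γ →* X ≃ₜ X) : Prop :=
  ∀ A B : Set X, IsClopen A → IsClopen B → B.Nonempty →
    (∀ μ ∈ invRadon α, μ A < μ B) → Subequidecomposable α A B

/-- Dynamical comparison (with respect to invariant Borel probability measures). -/
def DynComparisonBorel (α : Γ →* X ≃ₜ X) : Prop :=
  ∀ A B : Set X, IsClopen A → IsClopen B → B.Nonempty →
    (∀ μ ∈ invBorel α, μ A < μ B) → Subequidecomposable α A B

/-- The action `α` is minimal: the only closed invariant subsets are `∅` and `X`. -/
def IsMinimalAction (α : Γ →* X ≃ₜ X) : Prop :=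
  ∀ F : Set X, IsClosed F → (∀ γ : Γ, ⇑(α γ) '' F ⊆ F) → F = ∅ ∨ F = Set.univ

/-- Membership in the topological full group `⟦α⟧`: `g` coincides with elements of the
action on the pieces of a finite clopen partition of `X`. -/
def InTopFullGroup (α : Γ →* X ≃ₜ X) (g : X ≃ₜ X) : Prop :=
  ∃ (n : ℕ) (P : Fin n → Set X) (γ : Fin n → Γ),
    (∀ i, IsClopen (P i)) ∧ (Pairwise fun i j => Disjoint (P i) (P j)) ∧
    (⋃ i, P i) = Set.univ ∧ ∀ i, ∀ x ∈ P i, g x = α (γ i) x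

/-- `⟦α⟧` admits a dense locally finite subgroup: there is a subgroup `Λ` of `Homeo(X)`
contained in `⟦α⟧`, locally finite (all its finitely generated subgroups are finite), and
dense in `⟦α⟧` for the topology whose basic neighborhoods of `h` are
`{g : g A = h A for all A ∈ 𝒜}`, `𝒜` ranging over finite clopen partitions of `X`. -/
def HasDenseLocallyFiniteSubgroup (α : Γ →* X ≃ₜ X) : Prop :=
  ∃ Λ : Subgroup (X ≃ₜ X),
    ((Λ : Set (X ≃ₜ X)) ⊆ {g | InTopFullGroup α g}) ∧
    (∀ s : Finset (X ≃ₜ X), (s : Set (X ≃ₜ X)) ⊆ (Λ : Set (X ≃ₜ X)) →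
      ((Subgroup.closure (s : Set (X ≃ₜ X)) : Subgroup (X ≃ₜ X)) : Set (X ≃ₜ X)).Finite) ∧
    ∀ g : X ≃ₜ X, InTopFullGroup α g →
      ∀ (n : ℕ) (P : Fin n → Set X), (∀ i, IsClopen (P i)) →
        (Pairwise fun i j => Disjoint (P i) (P j)) → (⋃ i, P i) = Set.univ →
        ∃ l ∈ Λ, ∀ i, ⇑l '' P i = ⇑g '' P i

end Defs

/-- The topology on `Homeo(X)` whose basic neighborhoods of `h` are the sets
`{g : g A = h A for all A ∈ 𝒜}`, for `𝒜` a finite clopen partition of `X`; equivalently,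
the topology generated by the sets `{g : g '' A = B}` for `A`, `B` clopen. -/
def homeoTop (X : Type*) [TopologicalSpace X] : TopologicalSpace (X ≃ₜ X) :=
  TopologicalSpace.generateFrom
    {U | ∃ A B : Set X, IsClopen A ∧ IsClopen B ∧ U = {g : X ≃ₜ X | ⇑g '' A = B}}

/-- The topology on the space `A(Γ)` of actions of `Γ` on `X`, induced from the product
topology on `Homeo(X)^Γ`. -/
def actionTop (Γ : Type*) [Group Γ] (X : Type*) [TopologicalSpace X] :
    TopologicalSpace (Γ →* (X ≃ₜ X)) :=
  letI := homeoTop X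
  TopologicalSpace.induced (fun φ : Γ →* (X ≃ₜ X) => ⇑φ) Pi.topologicalSpace

/-!
If `[f]` is an order unit then `[1] ≤ k • [f]`, and integrating against an invariant probability
measure `μ` gives `1 ≤ k μ(f)`, so `μ(f) > 0`. Conversely, by compactness either finitely many
translates of the support of `f` cover `X`, and then `[1] ≤ k • [f]`, which makes `[f]` an order
unit; or some orbit `Γ x₀` misses the support of `f`. In the second case an invariant mean `m` on
`Γ` gives the finitely additive invariant probability `A ↦ m {γ | γ x₀ ∈ A}` on clopen sets,
which vanishes on the support of `f`. Since `X` is zero-dimensional, approximating compact sets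
from outside by clopen sets turns it into a content, whence an invariant Radon measure with
`μ(f) = 0`.
-/

open scoped NNReal

section TypeSemigroup

variable {Γ : Type*} [Group Γ] {X : Type*} [TopologicalSpace X] {α : Γ →* X ≃ₜ X}

theorem cls_add (f g : C(X, ℕ)) : cls α (f + g) = cls α f + cls α g := rfl

theorem cls_nsmul (k : ℕ) (f : C(X, ℕ)) : cls α (k • f) = k • cls α f :=
  map_nsmul (typeCon α).mk' k f

theorem cls_sum {ι : Type*} (s : Finset ι) (f : ι → C(X, ℕ)) :
    cls α (∑ i ∈ s, f i) = ∑ i ∈ s, cls α (f i) :=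
  map_sum (typeCon α).mk' f s

theorem cls_actC (γ : Γ) (f : C(X, ℕ)) : cls α (actC α γ f) = cls α f := by
  refine ((AddCon.eq _).2 (AddConGen.Rel.of _ _ ⟨1, fun _ => f, fun _ => γ, ?_, ?_⟩)).symm <;>
    simp

theorem tle_trans {a b c : TypeSemigroup α} (hab : tle α a b) (hbc : tle α b c) : tle α a c := by
  obtain ⟨u, rfl⟩ := hab
  obtain ⟨v, rfl⟩ := hbc
  exact ⟨u + v, (add_assoc _ _ _).symm⟩

theorem tle_nsmul {a b : TypeSemigroup α} (k : ℕ) (h : tle α a b) : tle α (k • a) (k • b) := by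
  obtain ⟨c, rfl⟩ := h
  exact ⟨k • c, (nsmul_add a c k).symm⟩

theorem tle_cls_of_le {f g : C(X, ℕ)} (h : ∀ x, f x ≤ g x) : tle α (cls α f) (cls α g) := by
  refine ⟨cls α ⟨fun x => g x - f x, by fun_prop⟩, ?_⟩
  rw [← cls_add]
  congr 1
  ext x
  simpa using Nat.add_sub_cancel' (h x)

theorem isOrderUnit_of_one_tle [CompactSpace X] {b : TypeSemigroup α} {k : ℕ}
    (h : tle α (cls α 1) (k • b)) : IsOrderUnit α b := by
  intro a
  induction a using AddCon.induction_on with | H g => ?_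
  obtain ⟨N, hN⟩ := (isCompact_range g.continuous).finite_of_discrete.bddAbove
  refine ⟨k * N, tle_trans (tle_cls_of_le (g := N • 1) fun x => ?_) ?_⟩
  · simpa using hN ⟨x, rfl⟩
  · rw [cls_nsmul, mul_nsmul]
    exact tle_nsmul N h

theorem one_tle_card_nsmul_of_cover {f : C(X, ℕ)} (t : Finset Γ)
    (ht : ∀ x, ∃ γ ∈ t, actC α γ f x ≠ 0) : tle α (cls α 1) (t.card • cls α f) := by
  have hsum : cls α (∑ γ ∈ t, actC α γ f) = t.card • cls α f := by
    simp [cls_sum, cls_actC]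
  rw [← hsum]
  refine tle_cls_of_le fun x => ?_
  obtain ⟨γ, hγ, hx⟩ := ht x
  calc (1 : C(X, ℕ)) x = 1 := rfl
    _ ≤ actC α γ f x := Nat.one_le_iff_ne_zero.2 hx
    _ ≤ ∑ δ ∈ t, actC α δ f x :=
      Finset.single_le_sum (f := fun δ => actC α δ f x) (fun _ _ => Nat.zero_le _) hγ
    _ = (∑ δ ∈ t, actC α δ f) x := by simp

theorem isClopen_setOf_ne_zero (f : C(X, ℕ)) : IsClopen {x | f x ≠ 0} :=
  (isClopen_discrete {0}ᶜ).preimage f.continuous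

theorem exists_finite_cover_or_orbit_subset_zeros [CompactSpace X] (α : Γ →* X ≃ₜ X)
    (f : C(X, ℕ)) :
    (∃ t : Finset Γ, ∀ x, ∃ γ ∈ t, actC α γ f x ≠ 0) ∨ ∃ x₀, ∀ γ, f (α γ x₀) = 0 := by
  by_cases h : ∀ x, ∃ γ, actC α γ f x ≠ 0
  · obtain ⟨t, ht⟩ := isCompact_univ.elim_finite_subcover (fun γ => {x | actC α γ f x ≠ 0})
      (fun γ => (isClopen_setOf_ne_zero _).isOpen) (fun x _ => mem_iUnion.2 (h x))
    exact Or.inl ⟨t, fun x => by simpa using ht (mem_univ x)⟩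
  · push Not at h
    obtain ⟨x₀, hx₀⟩ := h
    exact Or.inr ⟨x₀, fun γ => by simpa [actC] using hx₀ γ⁻¹⟩

end TypeSemigroup

section Integral

variable {Γ : Type*} [Group Γ] {X : Type*} [TopologicalSpace X] [MeasurableSpace X]
  [BorelSpace X] [CompactSpace X] {μ : Measure X}

theorem integrable_natCast (μ : Measure X) [IsFiniteMeasure μ] (f : C(X, ℕ)) :
    Integrable (fun x => (f x : ℝ)) μ :=
  (continuous_of_discreteTopology.comp f.continuous).integrable_of_hasCompactSupport
    (HasCompactSupport.of_compactSpace _)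

noncomputable def natIntegral (μ : Measure X) [IsFiniteMeasure μ] : C(X, ℕ) →+ ℝ where
  toFun f := ∫ x, (f x : ℝ) ∂μ
  map_zero' := by simp
  map_add' f g := by
    simpa using integral_add (integrable_natCast μ f) (integrable_natCast μ g)

theorem natIntegral_apply [IsFiniteMeasure μ] (f : C(X, ℕ)) :
    natIntegral μ f = ∫ x, (f x : ℝ) ∂μ :=
  rfl

theorem natIntegral_actC [IsFiniteMeasure μ] {α : Γ →* X ≃ₜ X} (hinv : ∀ γ, μ.map (α γ) = μ)
    (γ : Γ) (f : C(X, ℕ)) : natIntegral μ (actC α γ f) = natIntegral μ f := by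
  conv_rhs => rw [natIntegral_apply, ← hinv γ⁻¹]
  exact (integral_map (α γ⁻¹).continuous.aemeasurable
    (continuous_of_discreteTopology.comp f.continuous).aestronglyMeasurable).symm

theorem natIntegral_eq_of_typeCon [IsFiniteMeasure μ] {α : Γ →* X ≃ₜ X}
    (hinv : ∀ γ, μ.map (α γ) = μ) {f g : C(X, ℕ)} (h : typeCon α f g) :
    natIntegral μ f = natIntegral μ g := by
  have hker : typeCon α ≤ AddCon.ker (natIntegral μ) := by
    refine AddCon.addConGen_le.2 fun f g ⟨n, h, γ, hf, hg⟩ => ?_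
    simp [AddCon.ker_rel, hf, hg, natIntegral_actC hinv]
  exact hker h

theorem natIntegral_pos_of_isOrderUnit [IsProbabilityMeasure μ] {α : Γ →* X ≃ₜ X}
    (hinv : ∀ γ, μ.map (α γ) = μ) {f : C(X, ℕ)} (h : IsOrderUnit α (cls α f)) :
    0 < natIntegral μ f := by
  obtain ⟨k, d, hd⟩ := h (cls α 1)
  obtain ⟨g, rfl⟩ := AddCon.mk'_surjective d
  have hkf : natIntegral μ (1 + g) = natIntegral μ (k • f) :=
    natIntegral_eq_of_typeCon hinv ((AddCon.eq _).1 (by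
      change cls α (1 + g) = cls α (k • f)
      rwa [cls_add, cls_nsmul]))
  have hg : 0 ≤ natIntegral μ g := integral_nonneg fun _ => Nat.cast_nonneg _
  rw [map_add, map_nsmul, nsmul_eq_mul] at hkf
  have h1 : natIntegral μ 1 = 1 := by simp [natIntegral_apply]
  exact pos_of_mul_pos_right (by linarith) k.cast_nonneg

theorem natIntegral_eq_zero_of_null [IsFiniteMeasure μ] {f : C(X, ℕ)}
    (hf : μ {x | f x ≠ 0} = 0) :
    natIntegral μ f = 0 := by
  refine integral_eq_zero_of_ae (ae_iff.2 ?_)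
  simpa using hf

end Integral

section ClopenMeasure

variable {X : Type*} [TopologicalSpace X] {ν : Set X → ℝ≥0} {A B K L : Set X}

def IsClopenAdditive (ν : Set X → ℝ≥0) : Prop :=
  ∀ A B, IsClopen A → IsClopen B → Disjoint A B → ν (A ∪ B) = ν A + ν B

theorem IsClopenAdditive.mono (hν : IsClopenAdditive ν) (hA : IsClopen A) (hB : IsClopen B)
    (hAB : A ⊆ B) : ν A ≤ ν B := by
  rw [← union_sdiff_cancel hAB, hν _ _ hA (hB.diff hA) disjoint_sdiff_right]
  exact le_self_add

theorem IsClopenAdditive.union_le (hν : IsClopenAdditive ν) (hA : IsClopen A)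
    (hB : IsClopen B) : ν (A ∪ B) ≤ ν A + ν B := by
  rw [← union_sdiff_self, hν _ _ hA (hB.diff hA) disjoint_sdiff_right]
  exact add_le_add le_rfl (hν.mono (hB.diff hA) hB sdiff_subset)

noncomputable def clopenInf (ν : Set X → ℝ≥0) (K : Set X) : ℝ≥0 :=
  ⨅ A : {A : Set X // IsClopen A ∧ K ⊆ A}, ν A

instance (K : Set X) : Nonempty {A : Set X // IsClopen A ∧ K ⊆ A} :=
  ⟨⟨univ, isClopen_univ, subset_univ K⟩⟩

theorem clopenInf_le (hA : IsClopen A) (hKA : K ⊆ A) : clopenInf ν K ≤ ν A :=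
  ciInf_le (f := fun A : {A : Set X // IsClopen A ∧ K ⊆ A} => ν A) (OrderBot.bddBelow _)
    ⟨A, hA, hKA⟩

theorem le_clopenInf {c : ℝ≥0} (h : ∀ A, IsClopen A → K ⊆ A → c ≤ ν A) :
    c ≤ clopenInf ν K :=
  le_ciInf fun A => h A.1 A.2.1 A.2.2

theorem clopenInf_of_isClopen (hν : IsClopenAdditive ν) (hA : IsClopen A) :
    clopenInf ν A = ν A :=
  le_antisymm (clopenInf_le hA subset_rfl) (le_clopenInf fun _ hB hAB => hν.mono hA hB hAB)

theorem clopenInf_mono (hKL : K ⊆ L) : clopenInf ν K ≤ clopenInf ν L :=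
  le_clopenInf fun _ hA hLA => clopenInf_le hA (hKL.trans hLA)

theorem clopenInf_union_le (hν : IsClopenAdditive ν) :
    clopenInf ν (K ∪ L) ≤ clopenInf ν K + clopenInf ν L :=
  NNReal.le_iInf_add_iInf fun A B =>
    (clopenInf_le (A.2.1.union B.2.1) (union_subset_union A.2.2 B.2.2)).trans
      (hν.union_le A.2.1 B.2.1)

variable [CompactSpace X] [T2Space X] [TotallyDisconnectedSpace X]

theorem clopenInf_union_of_disjoint (hν : IsClopenAdditive ν) (hK : IsClosed K)
    (hL : IsClosed L) (hKL : Disjoint K L) :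
    clopenInf ν (K ∪ L) = clopenInf ν K + clopenInf ν L := by
  refine le_antisymm (clopenInf_union_le hν) (le_clopenInf fun A hA hKLA => ?_)
  obtain ⟨S, hS, hKS, hSL⟩ := exists_clopen_of_closed_subset_open hK hL.isOpen_compl
    (subset_compl_iff_disjoint_right.2 hKL)
  calc clopenInf ν K + clopenInf ν L ≤ ν (A ∩ S) + ν (A \ S) :=
        add_le_add (clopenInf_le (hA.inter hS) (subset_inter (subset_union_left.trans hKLA) hKS))
          (clopenInf_le (hA.diff hS) fun x hx => ⟨hKLA (Or.inr hx), fun hxS => hSL hxS hx⟩)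
    _ = ν A := by
        rw [← hν _ _ (hA.inter hS) (hA.diff hS) disjoint_sdiff_inter.symm, inter_union_sdiff]

noncomputable def clopenContent (ν : Set X → ℝ≥0) (hν : IsClopenAdditive ν) : Content X where
  toFun K := clopenInf ν K
  mono' _ _ := clopenInf_mono
  sup_disjoint' _ _ hKL hK hL := clopenInf_union_of_disjoint hν hK hL hKL
  sup_le' _ _ := clopenInf_union_le hν

variable [MeasurableSpace X]

theorem IsOpen.measure_eq_iSup_isClopen {μ : Measure X} [μ.Regular] {U : Set X}
    (hU : IsOpen U) : μ U = ⨆ (A) (_ : A ⊆ U) (_ : IsClopen A), μ A := by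
  refine le_antisymm ?_ (iSup₂_le fun A hAU => iSup_le fun _ => measure_mono hAU)
  rw [hU.measure_eq_iSup_isCompact]
  refine iSup₂_le fun K hKU => iSup_le fun hK => ?_
  obtain ⟨A, hA, hKA, hAU⟩ := exists_clopen_of_closed_subset_open hK.isClosed hU hKU
  exact (measure_mono hKA).trans (le_iSup₂_of_le A hAU (le_iSup_of_le hA le_rfl))

theorem MeasureTheory.Measure.ext_of_isClopen {μ μ' : Measure X} [μ.Regular] [μ'.Regular]
    (h : ∀ A, IsClopen A → μ A = μ' A) : μ = μ' :=
  Measure.OuterRegular.ext_isOpen fun U hU => by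
    rw [hU.measure_eq_iSup_isClopen, hU.measure_eq_iSup_isClopen]
    exact iSup_congr fun A => iSup_congr fun _ => iSup_congr fun hA => h A hA

theorem exists_regular_measure_eq_on_clopens [BorelSpace X] (hν : IsClopenAdditive ν) :
    ∃ μ : Measure X, μ.Regular ∧ ∀ A, IsClopen A → μ A = ν A := by
  refine ⟨(clopenContent ν hν).measure, inferInstance, fun A hA => ?_⟩
  rw [Content.measure_apply _ hA.isOpen.measurableSet,
    Content.outerMeasure_of_isOpen _ _ hA.isOpen,
    Content.innerContent_of_isCompact _ hA.isClosed.isCompact hA.isOpen]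
  simp [clopenContent, clopenInf_of_isClopen hν hA]

end ClopenMeasure

section OrbitMean

variable {Γ : Type*} [Group Γ] {X : Type*} [TopologicalSpace X] {α : Γ →* X ≃ₜ X}
  {m : Set Γ → ℝ}

def orbitMean (α : Γ →* X ≃ₜ X) (m : Set Γ → ℝ) (x₀ : X) (A : Set X) : ℝ≥0 :=
  (m ((fun γ => α γ x₀) ⁻¹' A)).toNNReal

theorem isClopenAdditive_orbitMean (hm : IsInvFapm m) (x₀ : X) :
    IsClopenAdditive (orbitMean α m x₀) := fun A B _ _ hAB => by
  rw [orbitMean, preimage_union, hm.2.2.2.1 _ _ (hAB.preimage _),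
    Real.toNNReal_add (hm.1 _) (hm.1 _)]
  rfl

theorem orbitMean_univ (hm : IsInvFapm m) (x₀ : X) : orbitMean α m x₀ univ = 1 := by
  simp [orbitMean, hm.2.2.1]

theorem orbitMean_preimage (hm : IsInvFapm m) (x₀ : X) (γ : Γ) (A : Set X) :
    orbitMean α m x₀ (α γ ⁻¹' A) = orbitMean α m x₀ A := by
  have : (fun δ => α δ x₀) ⁻¹' (α γ ⁻¹' A) = (γ⁻¹ * ·) '' ((fun δ => α δ x₀) ⁻¹' A) := by
    rw [image_mul_left, inv_inv]
    ext δ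
    simp [map_mul]
  rw [orbitMean, this, hm.2.2.2.2]
  rfl

theorem orbitMean_eq_zero (hm : IsInvFapm m) {x₀ : X} {A : Set X} (hA : ∀ γ, α γ x₀ ∉ A) :
    orbitMean α m x₀ A = 0 := by
  have hempty : m ∅ = 0 := by
    have := hm.2.2.2.1 ∅ ∅ (disjoint_empty _)
    rw [union_empty] at this
    linarith
  have hpre : (fun γ => α γ x₀) ⁻¹' A = ∅ := eq_empty_of_forall_notMem hA
  rw [orbitMean, hpre, hempty, Real.toNNReal_zero]

end OrbitMean

theorem exists_invariant_measure_eq_orbitMean {Γ : Type*} [Group Γ] {X : Type*}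
    [TopologicalSpace X] [MeasurableSpace X] [BorelSpace X] [CompactSpace X] [T2Space X]
    [TotallyDisconnectedSpace X] {m : Set Γ → ℝ} (hm : IsInvFapm m) (α : Γ →* X ≃ₜ X) (x₀ : X) :
    ∃ μ : Measure X, IsProbabilityMeasure μ ∧ μ.Regular ∧ (∀ γ, μ.map (α γ) = μ) ∧
      ∀ A, IsClopen A → μ A = orbitMean α m x₀ A := by
  obtain ⟨μ, hreg, hμ⟩ :=
    exists_regular_measure_eq_on_clopens (isClopenAdditive_orbitMean hm x₀)
  refine ⟨μ, ⟨by simp [hμ univ isClopen_univ, orbitMean_univ hm]⟩, hreg, fun γ => ?_, hμ⟩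
  have : (μ.map (α γ)).Regular := hreg.map (α γ)
  refine Measure.ext_of_isClopen fun A hA => ?_
  rw [Measure.map_apply (α γ).measurable hA.isOpen.measurableSet,
    hμ _ (hA.preimage (α γ).continuous), hμ A hA, orbitMean_preimage hm]

theorem stmt11_general {Γ : Type*} [Group Γ]
    {X : Type*} [TopologicalSpace X] [CompactSpace X] [T2Space X]
    [TotallyDisconnectedSpace X]
    (hamen : ∃ m : Set Γ → ℝ, IsInvFapm m)
    (α : Γ →* (X ≃ₜ X)) (f : C(X, ℕ)) :
    IsOrderUnit α (cls α f) ↔ ∀ μ ∈ invRadon α, 0 < intOf μ f := by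
  let _ : MeasurableSpace X := borel X
  have _ : BorelSpace X := ⟨rfl⟩
  refine ⟨fun h μ ⟨hprob, _, hinv⟩ => natIntegral_pos_of_isOrderUnit hinv h, fun hpos => ?_⟩
  rcases exists_finite_cover_or_orbit_subset_zeros α f with ⟨t, ht⟩ | ⟨x₀, hx₀⟩
  · exact isOrderUnit_of_one_tle (one_tle_card_nsmul_of_cover t ht)
  obtain ⟨m, hm⟩ := hamen
  obtain ⟨μ, hprob, hreg, hinv, hμ⟩ := exists_invariant_measure_eq_orbitMean hm α x₀
  have hnull : μ {x | f x ≠ 0} = 0 := by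
    rw [hμ _ (isClopen_setOf_ne_zero f),
      orbitMean_eq_zero hm fun γ (hγ : f (α γ x₀) ≠ 0) => hγ (hx₀ γ)]
    rfl
  exact ((hpos μ ⟨hprob, hreg, hinv⟩).ne' (natIntegral_eq_zero_of_null hnull)).elim

/-- Let `Γ` be a countable amenable group and `α` an action of `Γ` by
homeomorphisms on a nonempty compact Hausdorff `0`-dimensional space `X`. Then `b = [f]`
is an order unit in `T(α)` iff `μ(b) > 0` for every `μ ∈ M(α)`. -/
theorem stmt11 {Γ : Type*} [Group Γ] [Countable Γ]
    {X : Type*} [TopologicalSpace X] [CompactSpace X] [T2Space X]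
    [TotallyDisconnectedSpace X] [Nonempty X]
    (hamen : ∃ m : Set Γ → ℝ, IsInvFapm m)
    (α : Γ →* (X ≃ₜ X)) (f : C(X, ℕ)) :
    IsOrderUnit α (cls α f) ↔ ∀ μ ∈ invRadon α, 0 < intOf μ f :=
  stmt11_general hamen α f
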